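/- arXiv:0907.5527 — 2 statements merged into one kernel-verified Lean document; each statement's English description precedes it below -/
import Mathlib

section
/- Let F be a finite signature containing at least one constant and R a finite TRS over T(F,V) compatible with a Knuth–Bendix order ≻kbo induced by an admissible weight function and a precedence on F. Then there exists c ∈ ℕ such that for every ground term t, every →_R-derivation starting from t has length at most Ack(2^{c·|t|}, 0). -/
/-- First-order terms over a signature `F` (with arity function `ar`) and variables `V`. -/
inductive Tm (F : Type) (ar : F → ℕ) (V : Type) : Type where
  | var : V → Tm F ar V
  | fn : (f : F) → (Fin (ar f) → Tm F ar V) → Tm F ar V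

namespace Tm

variable {F : Type} {ar : F → ℕ} {V : Type}

/-- The size of a term: the number of occurrences of variables and function symbols. -/
def size : Tm F ar V → ℕ
  | var _ => 1
  | fn _ ts => 1 + ∑ i, (ts i).size

/-- Number of occurrences of the variable `x` in a term. -/
def count [DecidableEq V] (x : V) : Tm F ar V → ℕ
  | var y => if y = x then 1 else 0
  | fn _ ts => ∑ i, (ts i).count x

/-- The weight of a term with respect to a weight function `(w, w₀)`. -/
def weight (w : F → ℕ) (w0 : ℕ) : Tm F ar V → ℕ
  | var _ => w0
  | fn f ts => w f + ∑ i, weight w w0 (ts i)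

/-- `f` is the special symbol: a unary symbol of weight `0`. -/
def IsSpec (ar : F → ℕ) (w : F → ℕ) (f : F) : Prop := ar f = 1 ∧ w f = 0

/-- Stripping all leading occurrences of the special symbol: if `t = ∘^a t'` where the
root of `t'` is not special, then `core t = t'`. -/
def core (w : F → ℕ) : Tm F ar V → Tm F ar V
  | var x => var x
  | fn f ts =>
      if h : ar f = 1 ∧ w f = 0 then core w (ts ⟨0, by omega⟩) else fn f ts

/-- The number of leading occurrences of the special symbol: if `t = ∘^a t'` where the
root of `t'` is not special, then `specCount t = a`. -/
def specCount (w : F → ℕ) : Tm F ar V → ℕ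
  | var _ => 0
  | fn f ts =>
      if h : ar f = 1 ∧ w f = 0 then specCount w (ts ⟨0, by omega⟩) + 1 else 0

end Tm

/-- The Knuth–Bendix order induced by a precedence `prec` and a weight function
`(w, w0)`:  `s ≻kbo t` iff every variable occurs at least as often in `s` as in `t`
and either the weight of `s` is larger, or the weights are equal, `s = ∘^a g(s₁,…,sₙ)`,
`t = ∘^b h(t₁,…,tₘ)` and either `a > b`, or `a = b` and `g ≻ h`, or `a = b`, `g = h`
and `(s₁,…,sₙ)` is lexicographically larger than `(t₁,…,tₙ)`. -/
inductive Kbo {F : Type} {ar : F → ℕ} {V : Type} [DecidableEq V]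
    (prec : F → F → Prop) (w : F → ℕ) (w0 : ℕ) : Tm F ar V → Tm F ar V → Prop
  | wt {s t} : (∀ x, Tm.count x t ≤ Tm.count x s) →
      Tm.weight w w0 t < Tm.weight w w0 s → Kbo prec w w0 s t
  | spec {s t g ss h ts} : (∀ x, Tm.count x t ≤ Tm.count x s) →
      Tm.weight w w0 s = Tm.weight w w0 t →
      Tm.core w s = Tm.fn g ss → Tm.core w t = Tm.fn h ts →
      Tm.specCount w t < Tm.specCount w s → Kbo prec w w0 s t
  | prec {s t g ss h ts} : (∀ x, Tm.count x t ≤ Tm.count x s) →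
      Tm.weight w w0 s = Tm.weight w w0 t →
      Tm.core w s = Tm.fn g ss → Tm.core w t = Tm.fn h ts →
      Tm.specCount w s = Tm.specCount w t → prec g h → Kbo prec w w0 s t
  | lex {s t g ss ts} : (∀ x, Tm.count x t ≤ Tm.count x s) →
      Tm.weight w w0 s = Tm.weight w w0 t →
      Tm.core w s = Tm.fn g ss → Tm.core w t = Tm.fn g ts →
      Tm.specCount w s = Tm.specCount w t →
      ∀ i : Fin (ar g), (∀ j, j < i → ss j = ts j) → Kbo prec w w0 (ss i) (ts i) →
      Kbo prec w w0 s t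

namespace Tm

variable {F : Type} {ar : F → ℕ} {V : Type}

/-- Application of a substitution to a term. -/
def subst (σ : V → Tm F ar V) : Tm F ar V → Tm F ar V
  | var x => σ x
  | fn f ts => fn f fun i => (ts i).subst σ

/-- The set of function symbols occurring in a term. -/
def funcs : Tm F ar V → Set F
  | var _ => ∅
  | fn f ts => insert f (⋃ i, (ts i).funcs)

/-- The maximal nesting of the special symbol:  `spec (∘^a x) = a` and
`spec (∘^a g(t₁,…,tₙ)) = max({a} ∪ {spec tᵢ})`. -/
def specNest (w : F → ℕ) : Tm F ar V → ℕ
  | var _ => 0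
  | fn f ts =>
      if h : ar f = 1 ∧ w f = 0 then
        max (Tm.specCount w (fn f ts)) (specNest w (ts ⟨0, by omega⟩))
      else Finset.univ.sup fun i => specNest w (ts i)

/-- The rank of the first non-special symbol:  `rkT (∘^a x) = 0` and
`rkT (∘^a g(t₁,…,tₙ)) = rk g`. -/
def rkT (w : F → ℕ) (rk : F → ℕ) : Tm F ar V → ℕ
  | var _ => 0
  | fn f ts => if h : ar f = 1 ∧ w f = 0 then rkT w rk (ts ⟨0, by omega⟩) else rk f

/-- The maximal rank of non-special symbols:  `mrk (∘^a x) = 0` and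
`mrk (∘^a g(t₁,…,tₙ)) = max({rk g} ∪ {mrk tᵢ})`. -/
def mrk (w : F → ℕ) (rk : F → ℕ) : Tm F ar V → ℕ
  | var _ => 0
  | fn f ts =>
      if h : ar f = 1 ∧ w f = 0 then mrk w rk (ts ⟨0, by omega⟩)
      else max (rk f) (Finset.univ.sup fun i => mrk w rk (ts i))

end Tm

/-- `R` is a term rewrite system: left-hand sides are not variables and every variable
of a right-hand side occurs in the corresponding left-hand side. -/
def IsTRS {F : Type} {ar : F → ℕ} (R : Set (Tm F ar ℕ × Tm F ar ℕ)) : Prop :=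
  ∀ p ∈ R, (∀ x : ℕ, p.1 ≠ Tm.var x) ∧
    ∀ x : ℕ, 0 < Tm.count x p.2 → 0 < Tm.count x p.1

/-- The rewrite relation of `R`: the closure of the rules under contexts and
substitutions. -/
inductive Rew {F : Type} {ar : F → ℕ} (R : Set (Tm F ar ℕ × Tm F ar ℕ)) :
    Tm F ar ℕ → Tm F ar ℕ → Prop
  | rule {l r} (σ : ℕ → Tm F ar ℕ) : (l, r) ∈ R → Rew R (l.subst σ) (r.subst σ)
  | congr {f} {ts : Fin (ar f) → Tm F ar ℕ} (i) {t'} :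
      Rew R (ts i) t' → Rew R (.fn f ts) (.fn f (Function.update ts i t'))

/-- A `ρ`-derivation of length `n`: `d 0 → d 1 → ⋯ → d n`. -/
def ChainOf {A : Type} (ρ : A → A → Prop) (n : ℕ) (d : ℕ → A) : Prop :=
  ∀ i < n, ρ (d i) (d (i + 1))

/-!
Every rewrite step is a KBO decrease, since `≻kbo` is closed under substitutions and contexts.
A ground term of weight `W` is read as an ordinal below `ω^ω`, i.e. a coefficient vector of
length `vecLen M W` compared from the top (`Pi.Lex (· > ·) (· < ·)`): for `∘^a g(t₁,…,tₙ)` the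
top coefficient is `a·P + rk g + 1`, where `rk g < P` ranks `g` in the precedence, and the
vectors of the `tᵢ` sit in blocks below it, `t₁` highest. The four cases of the KBO then become
lexicographic decreases. Along a derivation from `t` the weight never grows and the size grows
by at most a constant per step, so the vectors have length `2^{O(|t|)}` and coefficients
bounded linearly in `|t|` and in the step number. Such descending sequences of length-`D`
vectors are bounded by a `D`-fold nested iteration, which `Ack(9·D, ·)` dominates.
-/

theorem Fin.eq_mk_zero_of_eq_one {n : ℕ} (h : n = 1) (i : Fin n) : i = ⟨0, by omega⟩ :=
  Fin.ext (by have := i.2; simp only; omega)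

theorem Fin.sum_univ_eq_of_eq_one {n : ℕ} (h : n = 1) (g : Fin n → ℕ) (i : Fin n) :
    ∑ j, g j = g i :=
  have : Subsingleton (Fin n) := Fin.subsingleton_iff_le_one.2 h.le
  Fintype.sum_subsingleton g i

theorem Fintype.sum_update_add {ι α M : Type} [Fintype ι] [DecidableEq ι] [AddCommMonoid M]
    (φ : α → M) (ts : ι → α) (i : ι) (t' : α) :
    ∑ j, φ (Function.update ts i t' j) + φ (ts i) = ∑ j, φ (ts j) + φ t' := by
  rw [← Finset.add_sum_erase _ _ (Finset.mem_univ i),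
    ← Finset.add_sum_erase _ _ (Finset.mem_univ i), Function.update_self,
    Finset.sum_congr rfl fun j hj => by rw [Function.update_of_ne (Finset.ne_of_mem_erase hj)]]
  abel

namespace Tm

variable {F : Type} {ar : F → ℕ} {V : Type}

theorem size_eq_weight (t : Tm F ar V) : size t = weight (fun _ => 1) 1 t := by
  induction t with
  | var => rfl
  | fn f ts ih => simp only [size, weight, ih]

theorem one_le_size (t : Tm F ar V) : 1 ≤ size t := by
  cases t <;> simp [size]

theorem le_weight {w : F → ℕ} {w0 : ℕ} (hwc : ∀ c, ar c = 0 → w0 ≤ w c) (t : Tm F ar V) :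
    w0 ≤ weight w w0 t := by
  induction t with
  | var => exact le_rfl
  | fn f ts ih =>
    rcases Nat.eq_zero_or_pos (ar f) with h | h
    · exact (hwc f h).trans (Nat.le_add_right _ _)
    · exact (ih ⟨0, h⟩).trans <| (Finset.single_le_sum (f := fun i => weight w w0 (ts i))
        (fun _ _ => Nat.zero_le _) (Finset.mem_univ _)).trans (Nat.le_add_left _ _)

theorem weight_le_mul_size {w : F → ℕ} {w0 Wm : ℕ} (hw : ∀ f, w f ≤ Wm) (hw0 : w0 ≤ Wm)
    (t : Tm F ar V) : weight w w0 t ≤ Wm * size t := by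
  induction t with
  | var => simpa [weight, size] using hw0
  | fn f ts ih =>
    rw [weight, size, mul_add, mul_one, Finset.mul_sum]
    exact Nat.add_le_add (hw f) (Finset.sum_le_sum fun i _ => ih i)

section Vars

variable [DecidableEq V]

def vars : Tm F ar V → Finset V
  | var x => {x}
  | fn _ ts => Finset.univ.biUnion fun i => (ts i).vars

def IsGround (t : Tm F ar V) : Prop := ∀ x, count x t = 0

theorem count_eq_zero_of_notMem_vars {x : V} {t : Tm F ar V} (h : x ∉ t.vars) :
    count x t = 0 := by
  induction t with
  | var y => simp_all [vars, count, eq_comm]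
  | fn f ts ih =>
    simp only [vars, Finset.mem_biUnion, Finset.mem_univ, true_and, not_exists] at h
    exact Finset.sum_eq_zero fun i _ => ih i (h i)

theorem count_arg_eq_zero {x : V} {f : F} {ts : Fin (ar f) → Tm F ar V}
    (h : count x (fn f ts) = 0) (i : Fin (ar f)) : count x (ts i) = 0 :=
  Finset.sum_eq_zero_iff.1 h i (Finset.mem_univ i)

theorem IsGround.arg {f : F} {ts : Fin (ar f) → Tm F ar V} (h : IsGround (fn f ts))
    (i : Fin (ar f)) : IsGround (ts i) :=
  fun x => count_arg_eq_zero (h x) i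

section Subst

variable (σ : V → Tm F ar V) {S : Finset V}

theorem count_subst (x : V) {u : Tm F ar V} (hS : ∀ y ∉ S, count y u = 0) :
    count x (u.subst σ) = ∑ y ∈ S, count y u * count x (σ y) := by
  induction u with
  | var z =>
    have hz : z ∈ S := by by_contra h; simpa [count] using hS z h
    simp [subst, count, hz]
  | fn f ts ih =>
    simp only [subst, count, Finset.sum_mul]
    rw [Finset.sum_comm]
    exact Finset.sum_congr rfl fun i _ => ih i fun y hy => count_arg_eq_zero (hS y hy) i

theorem weight_subst (w : F → ℕ) (w0 : ℕ) {u : Tm F ar V} (hS : ∀ y ∉ S, count y u = 0) :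
    weight w w0 (u.subst σ) + (∑ y ∈ S, count y u) * w0
      = weight w w0 u + ∑ y ∈ S, count y u * weight w w0 (σ y) := by
  induction u with
  | var z =>
    have hz : z ∈ S := by by_contra h; simpa [count] using hS z h
    simp [subst, count, weight, hz, add_comm]
  | fn f ts ih =>
    have hargs := Finset.sum_congr rfl fun i (_ : i ∈ Finset.univ) =>
      ih i fun y hy => count_arg_eq_zero (hS y hy) i
    simp only [Finset.sum_add_distrib, Finset.sum_mul] at hargs
    simp only [subst, weight, count, Finset.sum_mul]
    rw [Finset.sum_comm (s := S), Finset.sum_comm (s := S)]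
    omega

end Subst

section Weight

variable {w : F → ℕ} {w0 : ℕ}

theorem weight_subst_add_le (hwc : ∀ c, ar c = 0 → w0 ≤ w c) (σ : V → Tm F ar V)
    {s t : Tm F ar V} (hc : ∀ x, count x t ≤ count x s) :
    weight w w0 (t.subst σ) + weight w w0 s ≤ weight w w0 (s.subst σ) + weight w w0 t := by
  have hs := weight_subst σ w w0 (S := s.vars ∪ t.vars) (u := s)
    fun y hy => count_eq_zero_of_notMem_vars fun h => hy (Finset.mem_union_left _ h)
  have ht := weight_subst σ w w0 (S := s.vars ∪ t.vars) (u := t)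
    fun y hy => count_eq_zero_of_notMem_vars fun h => hy (Finset.mem_union_right _ h)
  have key : ∑ y ∈ s.vars ∪ t.vars, (count y t * weight w w0 (σ y) + count y s * w0)
      ≤ ∑ y ∈ s.vars ∪ t.vars, (count y s * weight w w0 (σ y) + count y t * w0) :=
    -- termwise, `(count y s - count y t) * (weight (σ y) - w0) ≥ 0`
    Finset.sum_le_sum fun y _ => by nlinarith [hc y, le_weight hwc (σ y) (w := w)]
  simp only [Finset.sum_add_distrib, Finset.sum_mul] at key hs ht
  omega

end Weight

theorem count_subst_le (σ : V → Tm F ar V) {s t : Tm F ar V}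
    (hc : ∀ x, count x t ≤ count x s) (x : V) : count x (t.subst σ) ≤ count x (s.subst σ) := by
  rw [count_subst σ x (S := s.vars ∪ t.vars)
      fun y hy => count_eq_zero_of_notMem_vars fun h => hy (Finset.mem_union_right _ h),
    count_subst σ x (S := s.vars ∪ t.vars)
      fun y hy => count_eq_zero_of_notMem_vars fun h => hy (Finset.mem_union_left _ h)]
  exact Finset.sum_le_sum fun y _ => Nat.mul_le_mul_right _ (hc y)

theorem size_subst_add_le (σ : V → Tm F ar V) {s t : Tm F ar V}
    (hc : ∀ x, count x t ≤ count x s) :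
    size (t.subst σ) + size s ≤ size (s.subst σ) + size t := by
  simpa only [size_eq_weight] using weight_subst_add_le (fun _ _ => le_rfl) σ hc

end Vars

section Special

variable {w : F → ℕ} {w0 : ℕ} {f : F} {ts : Fin (ar f) → Tm F ar V}

theorem IsSpec.ar_pos (h : IsSpec ar w f) : 0 < ar f := h.1 ▸ Nat.one_pos

theorem core_fn_of_isSpec (h : IsSpec ar w f) (i : Fin (ar f)) :
    core w (fn f ts) = core w (ts i) := by
  rw [core, dif_pos (show ar f = 1 ∧ w f = 0 from h), Fin.eq_mk_zero_of_eq_one h.1 i]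

theorem core_fn_of_not_isSpec (h : ¬IsSpec ar w f) : core w (fn f ts) = fn f ts := by
  rw [core, dif_neg (show ¬(ar f = 1 ∧ w f = 0) from h)]

theorem specCount_fn_of_isSpec (h : IsSpec ar w f) (i : Fin (ar f)) :
    specCount w (fn f ts) = specCount w (ts i) + 1 := by
  rw [specCount, dif_pos (show ar f = 1 ∧ w f = 0 from h), Fin.eq_mk_zero_of_eq_one h.1 i]

theorem specCount_fn_of_not_isSpec (h : ¬IsSpec ar w f) : specCount w (fn f ts) = 0 := by
  rw [specCount, dif_neg (show ¬(ar f = 1 ∧ w f = 0) from h)]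

theorem weight_fn_of_isSpec (h : IsSpec ar w f) (i : Fin (ar f)) :
    weight w w0 (fn f ts) = weight w w0 (ts i) := by
  rw [weight, Fin.sum_univ_eq_of_eq_one h.1 _ i, h.2, zero_add]

theorem size_fn_of_ar_eq_one (h : ar f = 1) (i : Fin (ar f)) :
    size (fn f ts) = size (ts i) + 1 := by
  rw [size, Fin.sum_univ_eq_of_eq_one h _ i, add_comm]

theorem count_fn_of_ar_eq_one [DecidableEq V] {x : V} (h : ar f = 1) (i : Fin (ar f)) :
    count x (fn f ts) = count x (ts i) :=
  Fin.sum_univ_eq_of_eq_one h _ i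

theorem weight_core (t : Tm F ar V) : weight w w0 (core w t) = weight w w0 t := by
  induction t with
  | var => rfl
  | fn f ts ih =>
    by_cases hs : IsSpec ar w f
    · rw [core_fn_of_isSpec hs ⟨0, hs.ar_pos⟩, weight_fn_of_isSpec hs ⟨0, _⟩, ih]
    · rw [core_fn_of_not_isSpec hs]

theorem count_core [DecidableEq V] (x : V) (t : Tm F ar V) :
    count x (core w t) = count x t := by
  induction t with
  | var => rfl
  | fn f ts ih =>
    by_cases hs : IsSpec ar w f
    · rw [core_fn_of_isSpec hs ⟨0, hs.ar_pos⟩, count_fn_of_ar_eq_one hs.1 ⟨0, _⟩, ih]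
    · rw [core_fn_of_not_isSpec hs]

section Core

variable {u : Tm F ar V} {g : F} {us : Fin (ar g) → Tm F ar V}

theorem not_isSpec_of_core_eq (h : core w u = fn g us) : ¬IsSpec ar w g := by
  induction u with
  | var => simp [core] at h
  | fn f ts ih =>
    by_cases hs : IsSpec ar w f
    · exact ih ⟨0, hs.ar_pos⟩ (by rwa [← core_fn_of_isSpec hs])
    · rw [core_fn_of_not_isSpec hs] at h
      cases h
      exact hs

theorem core_subst (σ : V → Tm F ar V) (h : core w u = fn g us) :
    core w (u.subst σ) = fn g fun i => (us i).subst σ := by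
  induction u with
  | var => simp [core] at h
  | fn f ts ih =>
    by_cases hs : IsSpec ar w f
    · rw [core_fn_of_isSpec hs ⟨0, hs.ar_pos⟩] at h
      exact (core_fn_of_isSpec hs ⟨0, _⟩).trans (ih _ h)
    · rw [core_fn_of_not_isSpec hs] at h
      cases h
      exact core_fn_of_not_isSpec hs

theorem specCount_subst (σ : V → Tm F ar V) (h : core w u = fn g us) :
    specCount w (u.subst σ) = specCount w u := by
  induction u with
  | var => simp [core] at h
  | fn f ts ih =>
    by_cases hs : IsSpec ar w f
    · rw [core_fn_of_isSpec hs ⟨0, hs.ar_pos⟩] at h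
      exact (specCount_fn_of_isSpec hs ⟨0, _⟩).trans
        ((ih _ h).symm ▸ (specCount_fn_of_isSpec hs ⟨0, _⟩).symm)
    · exact (specCount_fn_of_not_isSpec (ts := fun i => (ts i).subst σ) hs).trans
        (specCount_fn_of_not_isSpec hs).symm

theorem weight_arg_lt_of_not_isSpec (hw0 : 0 < w0) (hwc : ∀ c, ar c = 0 → w0 ≤ w c)
    (hs : ¬IsSpec ar w f) (i : Fin (ar f)) : weight w w0 (ts i) < weight w w0 (fn f ts) := by
  rw [weight, ← Finset.add_sum_erase _ _ (Finset.mem_univ i)]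
  by_cases h1 : ar f = 1
  · have hwf : w f ≠ 0 := fun h => hs ⟨h1, h⟩
    omega
  · have : Nontrivial (Fin (ar f)) := Fin.nontrivial_iff_two_le.2 (by have := i.2; omega)
    obtain ⟨k, hk⟩ := exists_ne i
    have := Finset.single_le_sum (f := fun j => weight w w0 (ts j)) (fun _ _ => Nat.zero_le _)
      (Finset.mem_erase.2 ⟨hk, Finset.mem_univ k⟩)
    have := le_weight hwc (ts k)
    omega

theorem weight_lt_of_core_eq (hw0 : 0 < w0) (hwc : ∀ c, ar c = 0 → w0 ≤ w c)
    (h : core w u = fn g us) (i : Fin (ar g)) : weight w w0 (us i) < weight w w0 u := by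
  rw [← weight_core u, h]
  exact weight_arg_lt_of_not_isSpec hw0 hwc (not_isSpec_of_core_eq h) i

variable [DecidableEq V]

theorem IsGround.exists_core_eq (hu : IsGround u) : ∃ g, ∃ us : Fin (ar g) → Tm F ar V,
    core w u = fn g us := by
  induction u with
  | var x => simpa [IsGround, count] using hu x
  | fn f ts ih =>
    by_cases hs : IsSpec ar w f
    · rw [core_fn_of_isSpec hs ⟨0, hs.ar_pos⟩]
      exact ih _ (hu.arg _)
    · exact ⟨f, ts, core_fn_of_not_isSpec hs⟩

theorem IsGround.core_arg (hu : IsGround u) (h : core w u = fn g us) (i : Fin (ar g)) :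
    IsGround (us i) :=
  IsGround.arg (f := g) (fun x => by rw [← h, count_core]; exact hu x) i

end Core

end Special

end Tm

namespace Kbo

open Tm

variable {F : Type} {ar : F → ℕ} {V : Type} [DecidableEq V] {prec : F → F → Prop}
  {w : F → ℕ} {w0 : ℕ} {s t : Tm F ar V}

theorem count_le (h : Kbo prec w w0 s t) (x : V) : count x t ≤ count x s := by
  cases h <;> simp_all

theorem weight_le (h : Kbo prec w w0 s t) : weight w w0 t ≤ weight w w0 s := by
  cases h <;> omega

theorem of_weight_le (hc : ∀ x, count x t ≤ count x s) (hle : weight w w0 t ≤ weight w w0 s)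
    (heq : weight w w0 s = weight w w0 t → Kbo prec w w0 s t) : Kbo prec w w0 s t :=
  hle.lt_or_eq.elim (wt hc) fun h => heq h.symm

theorem subst (hwc : ∀ c, ar c = 0 → w0 ≤ w c) (σ : V → Tm F ar V) (h : Kbo prec w w0 s t) :
    Kbo prec w w0 (s.subst σ) (t.subst σ) := by
  induction h with
  | wt hc hlt =>
    exact wt (count_subst_le σ hc) (by have := weight_subst_add_le hwc σ hc; omega)
  | spec hc hw hcs hct hlt =>
    exact of_weight_le (count_subst_le σ hc) (by have := weight_subst_add_le hwc σ hc; omega)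
      fun hwσ => spec (count_subst_le σ hc) hwσ (core_subst σ hcs) (core_subst σ hct)
        (by rwa [specCount_subst σ hcs, specCount_subst σ hct])
  | prec hc hw hcs hct heq hp =>
    exact of_weight_le (count_subst_le σ hc) (by have := weight_subst_add_le hwc σ hc; omega)
      fun hwσ => Kbo.prec (count_subst_le σ hc) hwσ (core_subst σ hcs) (core_subst σ hct)
        (by rwa [specCount_subst σ hcs, specCount_subst σ hct]) hp
  | lex hc hw hcs hct heq i hpre _ ih =>
    exact of_weight_le (count_subst_le σ hc) (by have := weight_subst_add_le hwc σ hc; omega)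
      fun hwσ => lex (count_subst_le σ hc) hwσ (core_subst σ hcs) (core_subst σ hct)
        (by rwa [specCount_subst σ hcs, specCount_subst σ hct]) i
        (fun j hj => congrArg (Tm.subst σ) (hpre j hj)) ih

theorem congr {f : F} {ts : Fin (ar f) → Tm F ar V} (i : Fin (ar f)) {t' : Tm F ar V}
    (h : Kbo prec w w0 (ts i) t') :
    Kbo prec w w0 (fn f ts) (fn f (Function.update ts i t')) := by
  have hc x : count x (fn f (Function.update ts i t')) ≤ count x (fn f ts) := by
    have := Fintype.sum_update_add (count x) ts i t'
    have := h.count_le x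
    simp only [count]
    omega
  have hw : weight w w0 (fn f (Function.update ts i t')) + weight w w0 (ts i)
      = weight w w0 (fn f ts) + weight w w0 t' := by
    have := Fintype.sum_update_add (weight w w0) ts i t'
    simp only [weight]
    omega
  by_cases hs : IsSpec ar w f
  · have hcs : core w (fn f ts) = core w (ts i) := core_fn_of_isSpec hs i
    have hct : core w (fn f (Function.update ts i t')) = core w t' := by
      rw [core_fn_of_isSpec hs i, Function.update_self]
    have hss : specCount w (fn f ts) = specCount w (ts i) + 1 := specCount_fn_of_isSpec hs i
    have hst : specCount w (fn f (Function.update ts i t')) = specCount w t' + 1 := by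
      rw [specCount_fn_of_isSpec hs i, Function.update_self]
    cases h with
    | wt _ hlt => exact wt hc (by omega)
    | spec _ hw' hcs' hct' hlt =>
      exact spec hc (by omega) (hcs.trans hcs') (hct.trans hct') (by omega)
    | prec _ hw' hcs' hct' heq hp =>
      exact Kbo.prec hc (by omega) (hcs.trans hcs') (hct.trans hct') (by omega) hp
    | lex _ hw' hcs' hct' heq j hpre hj =>
      exact lex hc (by omega) (hcs.trans hcs') (hct.trans hct') (by omega) j hpre hj
  · refine of_weight_le hc (by have := h.weight_le; omega) fun hweq => ?_
    refine lex hc hweq (core_fn_of_not_isSpec hs) (core_fn_of_not_isSpec hs)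
      (by rw [specCount_fn_of_not_isSpec hs, specCount_fn_of_not_isSpec hs]) i
      (fun j hj => (Function.update_of_ne hj.ne _ _).symm) ?_
    rwa [Function.update_self]

end Kbo

namespace Rew

open Tm

variable {F : Type} {ar : F → ℕ} {R : Set (Tm F ar ℕ × Tm F ar ℕ)} {s t : Tm F ar ℕ}

theorem kbo {prec : F → F → Prop} {w : F → ℕ} {w0 : ℕ} (hwc : ∀ c, ar c = 0 → w0 ≤ w c)
    (hR : ∀ p ∈ R, Kbo prec w w0 p.1 p.2) (h : Rew R s t) : Kbo prec w w0 s t := by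
  induction h with
  | rule σ hmem => exact (hR _ hmem).subst hwc σ
  | congr i _ ih => exact ih.congr i

theorem size_le {K : ℕ} (hR : ∀ p ∈ R, ∀ x, count x p.2 ≤ count x p.1)
    (hK : ∀ p ∈ R, size p.2 ≤ K) (h : Rew R s t) : size t ≤ size s + K := by
  induction h with
  | rule σ hmem =>
    have h1 := size_subst_add_le σ (hR _ hmem)
    have h2 := hK _ hmem
    dsimp only at h1 h2
    omega
  | @congr f ts i t' _ ih =>
    have := Fintype.sum_update_add size ts i t'
    simp only [size]
    omega

end Rew

section Vectors

theorem lex_add_right {u v : ℕ → ℕ} (h : Pi.Lex (· > ·) (· < ·) u v) (z : ℕ → ℕ) :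
    Pi.Lex (· > ·) (· < ·) (u + z) (v + z) := by
  obtain ⟨k, hk_eq, hk_lt⟩ := h
  exact ⟨k, fun j hj => by simp [hk_eq j hj], by simpa using hk_lt⟩

theorem lex_of_lt_of_eq_zero {u v : ℕ → ℕ} {N : ℕ} (hu : ∀ j, N < j → u j = 0)
    (hv : ∀ j, N < j → v j = 0) (h : u N < v N) : Pi.Lex (· > ·) (· < ·) u v :=
  ⟨N, fun j hj => (hu j hj).trans (hv j hj).symm, h⟩

def blocks (L M : ℕ) {n : ℕ} (u : Fin n → ℕ → ℕ) (j : ℕ) : ℕ :=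
  ∑ i : Fin n, if L * (M - i) ≤ j then u i (j - L * (M - i)) else 0

variable {L M n : ℕ} {u v : Fin n → ℕ → ℕ}

theorem blocks_eq_zero (hu : ∀ i j, L ≤ j → u i j = 0) {j : ℕ} (hj : L * (M + 1) ≤ j) :
    blocks L M u j = 0 :=
  Finset.sum_eq_zero fun i _ => by
    have : L * (M - i) ≤ L * M := Nat.mul_le_mul_left _ (Nat.sub_le _ _)
    rw [Nat.mul_succ] at hj
    split_ifs
    · exact hu i _ (by omega)
    · rfl

theorem blocks_le {c : Fin n → ℕ} (hu : ∀ i j, u i j ≤ c i) (j : ℕ) :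
    blocks L M u j ≤ ∑ i, c i :=
  Finset.sum_le_sum fun i _ => by
    split_ifs
    exacts [hu i _, Nat.zero_le _]

theorem blocks_add_eq_of_le (hn : n ≤ M) (hu : ∀ i j, L ≤ j → u i j = 0)
    (hv : ∀ i j, L ≤ j → v i j = 0) {i : Fin n} (heq : ∀ k < i, u k = v k) {j : ℕ}
    (hj : L * (M - i) ≤ j) :
    blocks L M u j + v i (j - L * (M - i)) = blocks L M v j + u i (j - L * (M - i)) := by
  have hrest : ∀ k ∈ Finset.univ.erase i,
      (if L * (M - k) ≤ j then u k (j - L * (M - k)) else 0)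
        = if L * (M - k) ≤ j then v k (j - L * (M - k)) else 0 := by
    intro k hk
    rcases lt_or_gt_of_ne (Finset.ne_of_mem_erase hk) with hki | hik
    · rw [heq k hki]
    · have : L * (M - k + 1) ≤ L * (M - i) := Nat.mul_le_mul_left _ (by omega)
      rw [Nat.mul_succ] at this
      split_ifs
      · rw [hu k _ (by omega), hv k _ (by omega)]
      · rfl
  unfold blocks
  rw [← Finset.add_sum_erase _ _ (Finset.mem_univ i), ← Finset.add_sum_erase _ _
    (Finset.mem_univ i), Finset.sum_congr rfl hrest, if_pos hj, if_pos hj]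
  abel

theorem blocks_lex (hn : n ≤ M) (hu : ∀ i j, L ≤ j → u i j = 0)
    (hv : ∀ i j, L ≤ j → v i j = 0) (i : Fin n) (heq : ∀ k < i, u k = v k)
    (h : Pi.Lex (· > ·) (· < ·) (u i) (v i)) :
    Pi.Lex (· > ·) (· < ·) (blocks L M u) (blocks L M v) := by
  obtain ⟨k, hk_eq, hk_lt⟩ := h
  refine ⟨L * (M - i) + k, fun j hj => ?_, ?_⟩
  · have h1 := blocks_add_eq_of_le hn hu hv heq (j := j) (by simp only [gt_iff_lt] at hj; omega)
    have h2 := hk_eq (j - L * (M - i)) (by simp only [gt_iff_lt] at hj ⊢; omega)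
    rw [h2] at h1
    exact Nat.add_right_cancel h1
  · have := blocks_add_eq_of_le hn hu hv heq (j := L * (M - i) + k) (by omega)
    simp only [Nat.add_sub_cancel_left] at this
    omega

def vecLen (M : ℕ) : ℕ → ℕ
  | 0 => 1
  | W + 1 => (M + 1) * vecLen M W + 1

theorem vecLen_pos (M W : ℕ) : 0 < vecLen M W := by
  cases W <;> simp [vecLen]

theorem vecLen_of_pos {M W : ℕ} (hW : 0 < W) :
    vecLen M W = (M + 1) * vecLen M (W - 1) + 1 := by
  obtain ⟨W, rfl⟩ := Nat.exists_eq_add_of_lt hW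
  rfl

theorem le_vecLen_sub_one {M W : ℕ} (hW : 0 < W) : vecLen M (W - 1) ≤ vecLen M W - 1 := by
  rw [vecLen_of_pos hW, Nat.add_sub_cancel]
  exact Nat.le_mul_of_pos_left _ (Nat.succ_pos M)

theorem vecLen_mono (M : ℕ) : Monotone (vecLen M) :=
  monotone_nat_of_le_succ fun W => by
    show vecLen M W ≤ (M + 1) * vecLen M W + 1
    nlinarith

theorem vecLen_le_pow (M W : ℕ) : vecLen M W ≤ (M + 2) ^ W := by
  induction W with
  | zero => rfl
  | succ W ih =>
    have := Nat.one_le_pow W (M + 2) (by omega)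
    rw [vecLen, pow_succ]
    nlinarith

theorem vecLen_le_two_pow (M W : ℕ) : vecLen M W ≤ 2 ^ ((M + 1) * W) := by
  rw [pow_mul]
  exact (vecLen_le_pow M W).trans (Nat.pow_le_pow_left Nat.lt_two_pow_self _)

end Vectors

namespace Tm

variable {F : Type} {ar : F → ℕ} {V : Type}

section Interp

variable (w : F → ℕ) (w0 : ℕ) (rk : F → ℕ) (P M : ℕ)

/-- The top coefficient of a term of weight `W` sits at `vecLen M W - 1`; below it, the argument
`i` of a non-special root occupies the block of length `vecLen M (W - 1)` at offset
`vecLen M (W - 1) * (M - i)`. -/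
def interp : Tm F ar V → ℕ → ℕ
  | var _ => 0
  | fn f ts =>
    if h : ar f = 1 ∧ w f = 0 then
      interp (ts ⟨0, by omega⟩) + Pi.single (vecLen M (weight w w0 (fn f ts)) - 1) P
    else
      Pi.single (vecLen M (weight w w0 (fn f ts)) - 1) (rk f + 1) +
        blocks (vecLen M (weight w w0 (fn f ts) - 1)) M fun i => interp (ts i)

variable {w w0 rk P M} {f : F} {ts : Fin (ar f) → Tm F ar V}

theorem interp_fn_of_isSpec (hs : IsSpec ar w f) (i : Fin (ar f)) :
    interp w w0 rk P M (fn f ts) = interp w w0 rk P M (ts i) +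
      Pi.single (vecLen M (weight w w0 (fn f ts)) - 1) P := by
  rw [interp, dif_pos (show ar f = 1 ∧ w f = 0 from hs), Fin.eq_mk_zero_of_eq_one hs.1 i]

theorem interp_fn_of_not_isSpec (hs : ¬IsSpec ar w f) :
    interp w w0 rk P M (fn f ts) =
      Pi.single (vecLen M (weight w w0 (fn f ts)) - 1) (rk f + 1) +
        blocks (vecLen M (weight w w0 (fn f ts) - 1)) M fun i => interp w w0 rk P M (ts i) := by
  rw [interp, dif_neg (show ¬(ar f = 1 ∧ w f = 0) from hs)]

theorem interp_eq_of_core_eq {t : Tm F ar V} {g : F} {us : Fin (ar g) → Tm F ar V}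
    (h : core w t = fn g us) :
    interp w w0 rk P M t =
      Pi.single (vecLen M (weight w w0 t) - 1) (specCount w t * P + rk g + 1) +
        blocks (vecLen M (weight w w0 t - 1)) M fun i => interp w w0 rk P M (us i) := by
  induction t with
  | var => simp [core] at h
  | fn f ts ih =>
    by_cases hs : IsSpec ar w f
    · rw [core_fn_of_isSpec hs ⟨0, hs.ar_pos⟩] at h
      rw [interp_fn_of_isSpec hs ⟨0, hs.ar_pos⟩, ih _ h, specCount_fn_of_isSpec hs ⟨0, hs.ar_pos⟩,
        weight_fn_of_isSpec hs ⟨0, hs.ar_pos⟩, add_right_comm, ← Pi.single_add]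
      congr 2
      ring
    · rw [core_fn_of_not_isSpec hs] at h
      cases h
      rw [interp_fn_of_not_isSpec hs, specCount_fn_of_not_isSpec hs, zero_mul, zero_add]

theorem interp_eq_zero (hw0 : 0 < w0) (hwc : ∀ c, ar c = 0 → w0 ≤ w c) (t : Tm F ar V)
    {j : ℕ} (hj : vecLen M (weight w w0 t) ≤ j) : interp w w0 rk P M t j = 0 := by
  induction t generalizing j with
  | var => rfl
  | fn f ts ih =>
    have hW : 0 < weight w w0 (fn f ts) := hw0.trans_le (le_weight hwc _)
    have hne : j ≠ vecLen M (weight w w0 (fn f ts)) - 1 := by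
      have := vecLen_pos M (weight w w0 (fn f ts))
      omega
    by_cases hs : IsSpec ar w f
    · rw [interp_fn_of_isSpec hs ⟨0, hs.ar_pos⟩, Pi.add_apply,
        ih _ (by rwa [← weight_fn_of_isSpec hs]), Pi.single_eq_of_ne hne, add_zero]
    · have hargs i j (hj : vecLen M (weight w w0 (fn f ts) - 1) ≤ j) :
          interp w w0 rk P M (ts i) j = 0 :=
        ih i <| (vecLen_mono M (Nat.le_sub_one_of_lt
          (weight_arg_lt_of_not_isSpec hw0 hwc hs i))).trans hj
      rw [vecLen_of_pos hW] at hj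
      rw [interp_fn_of_not_isSpec hs, Pi.add_apply, Pi.single_eq_of_ne hne,
        blocks_eq_zero hargs (by linarith), add_zero]

theorem interp_arg_eq_zero (hw0 : 0 < w0) (hwc : ∀ c, ar c = 0 → w0 ≤ w c)
    {t : Tm F ar V} {g : F} {us : Fin (ar g) → Tm F ar V} (h : core w t = fn g us)
    (i : Fin (ar g)) {j : ℕ} (hj : vecLen M (weight w w0 t - 1) ≤ j) :
    interp w w0 rk P M (us i) j = 0 :=
  interp_eq_zero hw0 hwc _ <|
    (vecLen_mono M (Nat.le_sub_one_of_lt (weight_lt_of_core_eq hw0 hwc h i))).trans hj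

theorem interp_top (hw0 : 0 < w0) (hwc : ∀ c, ar c = 0 → w0 ≤ w c)
    {t : Tm F ar V} {g : F} {us : Fin (ar g) → Tm F ar V} (h : core w t = fn g us) :
    interp w w0 rk P M t (vecLen M (weight w w0 t) - 1) = specCount w t * P + rk g + 1 := by
  have hW : 0 < weight w w0 t := hw0.trans_le (le_weight hwc _)
  rw [interp_eq_of_core_eq h, Pi.add_apply, Pi.single_eq_same,
    blocks_eq_zero (interp_arg_eq_zero hw0 hwc h)
      (by rw [vecLen_of_pos hW, Nat.add_sub_cancel, mul_comm]), add_zero]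

theorem interp_le_mul_size (hP : ∀ f, rk f < P) (t : Tm F ar V) (j : ℕ) :
    interp w w0 rk P M t j ≤ P * size t := by
  induction t generalizing j with
  | var => exact Nat.zero_le _
  | fn f ts ih =>
    by_cases hs : IsSpec ar w f
    · rw [interp_fn_of_isSpec hs ⟨0, hs.ar_pos⟩, size_fn_of_ar_eq_one hs.1 ⟨0, hs.ar_pos⟩,
        Pi.add_apply, Pi.single_apply, mul_add_one]
      have := ih ⟨0, hs.ar_pos⟩ j
      split_ifs <;> omega
    · have hblocks := blocks_le (L := vecLen M (weight w w0 (fn f ts) - 1)) (M := M)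
        (fun i j => ih i j) j
      rw [interp_fn_of_not_isSpec hs, size, Pi.add_apply, Pi.single_apply, mul_add, mul_one,
        Finset.mul_sum]
      have := hP f
      split_ifs <;> omega

theorem interp_lex_of_apply_lt (hw0 : 0 < w0) (hwc : ∀ c, ar c = 0 → w0 ≤ w c)
    {s t : Tm F ar V} (hle : weight w w0 t ≤ weight w w0 s)
    (h : interp w w0 rk P M t (vecLen M (weight w w0 s) - 1) <
      interp w w0 rk P M s (vecLen M (weight w w0 s) - 1)) :
    Pi.Lex (· > ·) (· < ·) (interp w w0 rk P M t) (interp w w0 rk P M s) :=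
  lex_of_lt_of_eq_zero
    (fun _ hj => interp_eq_zero hw0 hwc t ((vecLen_mono M hle).trans (by omega)))
    (fun _ hj => interp_eq_zero hw0 hwc s (by omega)) h

theorem vecLen_weight_le_two_pow {Wm : ℕ} (hw : ∀ f, w f ≤ Wm) (hw0 : w0 ≤ Wm) (t : Tm F ar V) :
    vecLen M (weight w w0 t) ≤ 2 ^ ((M + 1) * Wm * size t) :=
  (vecLen_le_two_pow M _).trans <| Nat.pow_le_pow_right (by norm_num) <| by
    rw [mul_assoc]
    exact Nat.mul_le_mul_left _ (weight_le_mul_size hw hw0 t)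

end Interp

end Tm

namespace Kbo

open Tm

variable {F : Type} {ar : F → ℕ} {V : Type} [DecidableEq V] {prec : F → F → Prop}
  {w : F → ℕ} {w0 : ℕ} {rk : F → ℕ} {P M : ℕ}

theorem interp_lex (hw0 : 0 < w0) (hwc : ∀ c, ar c = 0 → w0 ≤ w c) (hM : ∀ f, ar f ≤ M)
    (hP : ∀ f, rk f < P) (hrk : ∀ f g, prec f g → rk g < rk f) {s t : Tm F ar V}
    (h : Kbo prec w w0 s t) (hs : IsGround s) :
    Pi.Lex (· > ·) (· < ·) (interp w w0 rk P M t) (interp w w0 rk P M s) := by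
  induction h with
  | @wt s t _ hlt =>
    obtain ⟨g, us, hcs⟩ := hs.exists_core_eq (w := w)
    have hW : 0 < weight w w0 s := hw0.trans_le (le_weight hwc s)
    refine interp_lex_of_apply_lt hw0 hwc hlt.le ?_
    rw [interp_top hw0 hwc hcs, interp_eq_zero hw0 hwc t
      ((vecLen_mono M (Nat.le_sub_one_of_lt hlt)).trans (le_vecLen_sub_one hW))]
    omega
  | @spec s t g ss g' ts _ hw hcs hct hlt =>
    refine interp_lex_of_apply_lt hw0 hwc hw.ge ?_
    rw [interp_top hw0 hwc hcs, hw, interp_top hw0 hwc hct]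
    have hmul := Nat.mul_le_mul_right P hlt
    rw [Nat.succ_mul] at hmul
    have := hP g'
    omega
  | @prec s t g ss g' ts _ hw hcs hct heq hp =>
    refine interp_lex_of_apply_lt hw0 hwc hw.ge ?_
    rw [interp_top hw0 hwc hcs, hw, interp_top hw0 hwc hct, heq]
    have := hrk _ _ hp
    omega
  | @lex s t g ss ts _ hw hcs hct heq i hpre _ ih =>
    rw [interp_eq_of_core_eq hcs, interp_eq_of_core_eq hct, hw, heq, add_comm,
      add_comm (Pi.single _ _)]
    exact lex_add_right (blocks_lex (hM g) (interp_arg_eq_zero hw0 hwc hct)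
      (fun i j hj => interp_arg_eq_zero hw0 hwc hcs i (hw ▸ hj)) i
      (fun k hk => by rw [hpre k hk]) (ih (hs.core_arg hcs i))) _

end Kbo

section Descent

structure BoundedDescent (C D B m : ℕ) (v : ℕ → ℕ → ℕ) : Prop where
  lex_lt : ∀ i < m, Pi.Lex (· > ·) (· < ·) (v (i + 1)) (v i)
  eq_zero : ∀ i ≤ m, ∀ j, D ≤ j → v i j = 0
  le : ∀ i ≤ m, ∀ j, v i j ≤ B + C * i

/-- Each of the at most `B + 1` values of the top coefficient allows a run whose length is
bounded by the bound for the lower `D` coefficients. -/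
def chainBound (C : ℕ) : ℕ → ℕ → ℕ
  | 0, _ => 0
  | D + 1, B => (fun x => x + chainBound C D (B + C * x) + 1)^[B + 1] 0

theorem chainBound_mono (C D : ℕ) : Monotone (chainBound C D) := by
  induction D with
  | zero => exact fun _ _ _ => le_rfl
  | succ D ih =>
    intro B B' hB
    have hstep B : Monotone fun x => x + chainBound C D (B + C * x) + 1 := fun x y hxy => by
      have := ih (Nat.add_le_add_left (Nat.mul_le_mul_left C hxy) B)
      simp only
      omega
    calc chainBound C (D + 1) B
        ≤ (fun x => x + chainBound C D (B' + C * x) + 1)^[B + 1] 0 :=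
          (hstep B).iterate_le_of_le (fun x => by
            have := ih (Nat.add_le_add_right hB (C * x))
            simp only
            omega) _ _
      _ ≤ chainBound C (D + 1) B' :=
          Function.monotone_iterate_of_id_le (fun x => by simp only [id]; omega) (by omega) 0

namespace BoundedDescent

variable {C D B m : ℕ} {v : ℕ → ℕ → ℕ}

theorem top_succ_le (h : BoundedDescent C (D + 1) B m v) {i : ℕ} (hi : i < m) :
    v (i + 1) D ≤ v i D := by
  obtain ⟨k, hk_eq, hk_lt⟩ := h.lex_lt i hi
  rcases lt_trichotomy k D with hkD | rfl | hDk
  · exact (hk_eq D hkD).le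
  · exact hk_lt.le
  · have := h.eq_zero i hi.le k hDk
    have := h.eq_zero (i + 1) hi k hDk
    omega

theorem top_antitone (h : BoundedDescent C (D + 1) B m v) {a b : ℕ} (hab : a ≤ b)
    (hbm : b ≤ m) : v b D ≤ v a D := by
  induction b, hab using Nat.le_induction with
  | base => exact le_rfl
  | succ b _ ih => exact (h.top_succ_le hbm).trans (ih (by omega))

theorem lower_of_top_eq (h : BoundedDescent C (D + 1) B m v) {a e : ℕ} (hae : a ≤ e) (hem : e ≤ m)
    (htop : v e D = v a D) :
    BoundedDescent C D (B + C * a) (e - a) fun p j => if j < D then v (a + p) j else 0 where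
  lex_lt p hp := by
    show Pi.Lex _ _ (fun j => if j < D then v (a + p + 1) j else 0)
      (fun j => if j < D then v (a + p) j else 0)
    obtain ⟨k, hk_eq, hk_lt⟩ := h.lex_lt (a + p) (by omega)
    have hkD : k < D := by
      rcases lt_trichotomy k D with hkD | rfl | hDk
      · exact hkD
      · have := h.top_antitone (Nat.le_add_right a p) (by omega)
        have := h.top_antitone (show a + p + 1 ≤ e by omega) hem
        omega
      · have := h.eq_zero (a + p) (by omega) k hDk
        have := h.eq_zero (a + p + 1) (by omega) k hDk
        omega
    refine ⟨k, fun j hj => ?_, by simpa [hkD] using hk_lt⟩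
    dsimp only
    split_ifs
    exacts [hk_eq j hj, rfl]
  eq_zero p _ j hj := if_neg (by omega)
  le p hp j := by
    split_ifs
    · exact (h.le (a + p) (by omega) j).trans (by rw [mul_add, add_assoc])
    · exact Nat.zero_le _

theorem length_le_iterate (h : BoundedDescent C (D + 1) B m v)
    (ihD : ∀ {B' m' v'}, BoundedDescent C D B' m' v' → m' ≤ chainBound C D B') (k : ℕ)
    {a : ℕ} (ham : a ≤ m) (hk : v a D < k) :
    m ≤ (fun x => x + chainBound C D (B + C * x) + 1)^[k] a := by
  induction k generalizing a with
  | zero => omega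
  | succ k ih =>
    set step := fun x => x + chainBound C D (B + C * x) + 1
    have hid : id ≤ step := fun x => by simp only [id, step]; omega
    have hmono : Monotone step := fun x y hxy => by
      have := chainBound_mono C D (Nat.add_le_add_left (Nat.mul_le_mul_left C hxy) B)
      simp only [step]
      omega
    -- `e` is the end of the run of the top coefficient starting at `a`
    set e := Nat.findGreatest (fun e => v e D = v a D) m
    have hae : a ≤ e := Nat.le_findGreatest (P := fun e => v e D = v a D) ham rfl
    have hem : e ≤ m := Nat.findGreatest_le m
    have htop : v e D = v a D := Nat.findGreatest_spec (P := fun e => v e D = v a D) ham rfl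
    have hrun : e + 1 ≤ step a := by
      have := ihD (h.lower_of_top_eq hae hem htop)
      simp only [step]
      omega
    rw [Function.iterate_succ_apply]
    rcases hem.lt_or_eq with hem | hem
    · have hne : v (e + 1) D ≠ v a D :=
        Nat.findGreatest_is_greatest (P := fun e => v e D = v a D) (Nat.lt_add_one e) hem
      have := h.top_succ_le hem
      exact (ih (a := e + 1) hem (by omega)).trans (hmono.iterate k hrun)
    · exact (hem ▸ Nat.le_of_succ_le hrun).trans (Function.id_le_iterate_of_id_le hid k _)

theorem length_le : ∀ {D B m : ℕ} {v : ℕ → ℕ → ℕ}, BoundedDescent C D B m v →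
    m ≤ chainBound C D B
  | 0, _, m, _, h => by
    by_contra! hm
    obtain ⟨k, -, hk_lt⟩ := h.lex_lt 0 hm
    have := h.eq_zero 0 (Nat.zero_le m) k (Nat.zero_le k)
    have := h.eq_zero 1 hm k (Nat.zero_le k)
    omega
  | D + 1, B, m, v, h => h.length_le_iterate length_le (B + 1) (Nat.zero_le m)
      (by have := h.le 0 (Nat.zero_le m) D; omega)

end BoundedDescent

end Descent

section Ackermann

theorem ack_add_le (m n k : ℕ) : ack m n + k ≤ ack m (n + k) := by
  induction k with
  | zero => rfl
  | succ k ih => exact Nat.succ_le_of_lt (ih.trans_lt (ack_strictMono_right m (Nat.lt_add_one _)))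

theorem ack_le_ack_add_zero (m n : ℕ) : ack m n ≤ ack (m + n) 0 := by
  induction n generalizing m with
  | zero => rfl
  | succ n ih => exact (ack_succ_right_le_ack_succ_left m n).trans ((ih (m + 1)).trans_eq
      (by rw [add_right_comm, add_assoc]))

theorem iterate_ack (m k n : ℕ) : (ack m)^[n] (ack (m + 1) k) = ack (m + 1) (k + n) := by
  induction n with
  | zero => rfl
  | succ n ih => rw [Function.iterate_succ_apply', ih, ← ack_succ_succ, add_assoc]

theorem iterate_add_le_iterate {f g : ℕ → ℕ} {s : ℕ} (hg : Monotone g)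
    (h : ∀ x, f x + s ≤ g (x + s)) (n x : ℕ) : f^[n] x + s ≤ g^[n] (x + s) := by
  induction n generalizing x with
  | zero => rfl
  | succ n ih =>
    rw [Function.iterate_succ_apply, Function.iterate_succ_apply]
    exact (ih (f x)).trans (hg.iterate n (h x))

theorem chainBound_le_ack (C D B : ℕ) : chainBound C D B < ack (9 * D) (B + (C + 2)) := by
  induction D generalizing B with
  | zero => exact ack_pos _ _
  | succ D ih =>
    set s := B + (C + 2)
    have hstep x : x + chainBound C D (B + C * x) + 1 + s ≤ ack (9 * D + 4) (x + s) := by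
      have hsq : B + C * x + (C + 2) + (x + s + 1) ≤ (x + s + 1) ^ 2 := by
        simp only [s]
        nlinarith
      calc x + chainBound C D (B + C * x) + 1 + s
          ≤ ack (9 * D) (B + C * x + (C + 2)) + (x + s + 1) := by
            have := ih (B + C * x)
            omega
        _ ≤ ack (9 * D) ((x + s + 1) ^ 2) :=
          (ack_add_le _ _ _).trans (ack_mono_right _ hsq)
        _ ≤ ack (9 * D + 4) (x + s) := (ack_add_one_sq_lt_ack_add_four _ _).le
    calc chainBound C (D + 1) B
        ≤ (fun x => x + chainBound C D (B + C * x) + 1)^[B + 1] 0 + s := Nat.le_add_right _ _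
      _ ≤ (ack (9 * D + 4))^[B + 1] (0 + s) :=
          iterate_add_le_iterate (ack_mono_right _) hstep _ _
      _ ≤ (ack (9 * D + 4))^[B + 1] (ack (9 * D + 4 + 1) s) :=
          (ack_mono_right _).iterate _ (by rw [zero_add]; exact (lt_ack_right _ _).le)
      _ = ack (9 * D + 4 + 1) (s + (B + 1)) := iterate_ack _ _ _
      _ ≤ ack (9 * D + 4 + 1) ((s + 1) ^ 2) := ack_mono_right _ (by simp only [s]; nlinarith)
      _ < ack (9 * (D + 1)) s := (ack_add_one_sq_lt_ack_add_four _ _).trans_eq (by ring_nf)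

end Ackermann

theorem exists_rank_lt_card {α : Type} [Finite α] {r : α → α → Prop} (hirr : ∀ a, ¬r a a)
    (htrans : ∀ a b c, r a b → r b c → r a c) :
    ∃ rk : α → ℕ, (∀ a, rk a < Nat.card α) ∧ ∀ a b, r a b → rk b < rk a := by
  refine ⟨fun a => {b | r a b}.ncard, fun a => ?_, fun a b hab => ?_⟩
  · rw [← Set.ncard_univ]
    exact Set.ncard_lt_ncard (Set.ssubset_univ_iff.2 fun h => hirr a (Set.eq_univ_iff_forall.1 h a))
  · exact Set.ncard_lt_ncard ⟨fun c hc => htrans a b c hab hc, fun h => hirr b (h hab)⟩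

open Tm in
theorem ChainOf.length_le_chainBound {F : Type} {ar : F → ℕ} {R : Set (Tm F ar ℕ × Tm F ar ℕ)}
    {prec : F → F → Prop} {w : F → ℕ} {w0 : ℕ} {rk : F → ℕ} {P M K : ℕ}
    (hw0 : 0 < w0) (hwc : ∀ c, ar c = 0 → w0 ≤ w c) (hM : ∀ f, ar f ≤ M)
    (hP : ∀ f, rk f < P) (hrk : ∀ f g, prec f g → rk g < rk f)
    (hR : ∀ p ∈ R, Kbo prec w w0 p.1 p.2) (hK : ∀ p ∈ R, size p.2 ≤ K)
    {m : ℕ} {d : ℕ → Tm F ar ℕ} (hd : ChainOf (Rew R) m d) (hg : IsGround (d 0)) :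
    m ≤ chainBound (P * K) (vecLen M (weight w w0 (d 0))) (P * size (d 0)) := by
  have inv i (hi : i ≤ m) : IsGround (d i) ∧ weight w w0 (d i) ≤ weight w w0 (d 0) ∧
      size (d i) ≤ size (d 0) + K * i := by
    induction i with
    | zero => exact ⟨hg, le_rfl, Nat.le_add_right _ _⟩
    | succ i ih =>
      obtain ⟨hgi, hwi, hsi⟩ := ih (by omega)
      have hkbo := (hd i hi).kbo hwc hR
      have hsize := (hd i hi).size_le (fun p hp => (hR p hp).count_le) hK
      refine ⟨fun x => Nat.eq_zero_of_le_zero ((hkbo.count_le x).trans (hgi x).le),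
        hkbo.weight_le.trans hwi, ?_⟩
      rw [mul_add_one]
      omega
  refine BoundedDescent.length_le ⟨fun i hi => ((hd i hi).kbo hwc hR).interp_lex hw0 hwc hM hP
    hrk (inv i hi.le).1, fun i hi j hj => interp_eq_zero hw0 hwc _
    ((vecLen_mono M (inv i hi).2.1).trans hj), fun i hi j => ?_⟩
  calc interp w w0 rk P M (d i) j ≤ P * size (d i) := interp_le_mul_size hP _ j
    _ ≤ P * (size (d 0) + K * i) := Nat.mul_le_mul_left _ (inv i hi).2.2
    _ = P * size (d 0) + P * K * i := by ring

theorem nine_mul_add_le_two_pow {E a b c n : ℕ} (hn : 1 ≤ n) (hE : E ≤ 2 ^ (a * n)) :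
    9 * E + (b * n + c) ≤ 2 ^ ((a + b + c + 4) * n) := by
  have h1 : 9 * E ≤ 2 ^ (a * n + 4) := by rw [pow_add]; omega
  have h2 : b * n + c < 2 ^ ((b + c) * n) :=
    (show b * n + c ≤ (b + c) * n by nlinarith).trans_lt Nat.lt_two_pow_self
  have h3 : 1 ≤ 2 ^ (a * n + 4) := Nat.one_le_two_pow
  calc 9 * E + (b * n + c) ≤ 2 ^ (a * n + 4) * (b * n + c + 1) := by
        have := Nat.le_mul_of_pos_left (b * n + c) h3
        rw [mul_add_one]
        omega
    _ ≤ 2 ^ (a * n + 4) * 2 ^ ((b + c) * n) := Nat.mul_le_mul_left _ h2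
    _ = 2 ^ (a * n + 4 + (b + c) * n) := (pow_add _ _ _).symm
    _ ≤ 2 ^ ((a + b + c + 4) * n) := Nat.pow_le_pow_right (by norm_num) (by nlinarith)

theorem kbo_derivation_bound_finite_sig_general {F : Type} [Finite F] {ar : F → ℕ}
    (prec : F → F → Prop)
    (hirr : ∀ f, ¬ prec f f)
    (htrans : ∀ f g h, prec f g → prec g h → prec f h)
    (w : F → ℕ) (w0 : ℕ) (hw0 : 0 < w0)
    (hwc : ∀ c, ar c = 0 → w0 ≤ w c)
    (R : Finset (Tm F ar ℕ × Tm F ar ℕ))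
    (hcompat : ∀ p ∈ R, Kbo prec w w0 p.1 p.2) :
    ∃ c : ℕ, ∀ t : Tm F ar ℕ,
      (∀ x : ℕ, Tm.count x t = 0) →
      ∀ (m : ℕ) (d : ℕ → Tm F ar ℕ), d 0 = t →
        ChainOf (Rew (↑R : Set (Tm F ar ℕ × Tm F ar ℕ))) m d →
        m ≤ ack (2 ^ (c * Tm.size t)) 0 := by
  have := Fintype.ofFinite F
  obtain ⟨rk, hP, hrk⟩ := exists_rank_lt_card hirr htrans
  set P := Nat.card F
  set M := Finset.univ.sup ar
  set K := R.sup fun p => p.2.size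
  set Wm := max (Finset.univ.sup w) w0
  refine ⟨(M + 1) * Wm + P + (P * K + 2) + 4, fun t ht m d hd0 hd => ?_⟩
  subst hd0
  have hE : vecLen M ((d 0).weight w w0) ≤ 2 ^ ((M + 1) * Wm * (d 0).size) :=
    Tm.vecLen_weight_le_two_pow (fun f => le_max_of_le_left (Finset.le_sup (Finset.mem_univ f)))
      (le_max_right _ _) _
  calc m ≤ chainBound (P * K) (vecLen M ((d 0).weight w w0)) (P * (d 0).size) :=
        hd.length_le_chainBound hw0 hwc (fun f => Finset.le_sup (Finset.mem_univ f)) hP hrk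
          hcompat (fun p hp => Finset.le_sup (f := fun p => p.2.size) hp) ht
    _ ≤ ack (9 * vecLen M ((d 0).weight w w0)) (P * (d 0).size + (P * K + 2)) :=
        (chainBound_le_ack _ _ _).le
    _ ≤ ack (9 * vecLen M ((d 0).weight w w0) + (P * (d 0).size + (P * K + 2))) 0 :=
        ack_le_ack_add_zero _ _
    _ ≤ ack (2 ^ (((M + 1) * Wm + P + (P * K + 2) + 4) * (d 0).size)) 0 :=
        ack_mono_left 0 (nine_mul_add_le_two_pow (Tm.one_le_size _) hE)

/-- Let `F` be a finite signature containing a constant and `R` a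
finite TRS compatible with a Knuth–Bendix order `≻kbo` (induced by an admissible weight
function and a precedence).  Then there is a `c` such that for every ground term `t`,
every `→_R`-derivation from `t` has length at most `Ack(2^{c·|t|}, 0)`. -/
theorem kbo_derivation_bound_finite_sig {F : Type} [Finite F] {ar : F → ℕ}
    (hconst : ∃ c, ar c = 0)
    (prec : F → F → Prop)
    (hirr : ∀ f, ¬ prec f f)
    (htrans : ∀ f g h, prec f g → prec g h → prec f h)
    (w : F → ℕ) (w0 : ℕ) (hw0 : 0 < w0)
    (hwc : ∀ c, ar c = 0 → w0 ≤ w c)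
    (hadm : ∀ f, ar f = 1 → w f = 0 → ∀ g, g ≠ f → prec f g)
    (R : Finset (Tm F ar ℕ × Tm F ar ℕ))
    (hTRS : IsTRS (↑R : Set (Tm F ar ℕ × Tm F ar ℕ)))
    (hcompat : ∀ p ∈ R, Kbo prec w w0 p.1 p.2) :
    ∃ c : ℕ, ∀ t : Tm F ar ℕ,
      (∀ x : ℕ, Tm.count x t = 0) →
      ∀ (m : ℕ) (d : ℕ → Tm F ar ℕ), d 0 = t →
        ChainOf (Rew (↑R : Set (Tm F ar ℕ × Tm F ar ℕ))) m d →
        m ≤ ack (2 ^ (c * Tm.size t)) 0 :=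
  kbo_derivation_bound_finite_sig_general prec hirr htrans w w0 hw0 hwc R hcompat
end

section
/- Let R be a TRS over a finite signature F that is compatible with some Δ-restricted interpretation. Then R is terminating, and there exists C ∈ ℕ such that for every term t ∈ T(F,V), every →_R-derivation starting from t has length at most C·|t|². -/
/-- A Δ-linear interpretation for a signature `F` with arity function `ar`. -/
structure DeltaLin (F : Type) (ar : F → ℕ) where
  a : (f : F) → Fin (ar f) → ℕ
  b : (f : F) → Fin (ar f) → ℕ
  c : F → ℕ
  d : F → ℕ
  pos : ∀ f i, 1 ≤ a f i + b f i

namespace DeltaLin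

variable {F : Type} {ar : F → ℕ}

/-- The interpretation function
`f[Δ](z₁,…,zₙ) = Σᵢ a_{f,i}·zᵢ + Σᵢ b_{f,i}·zᵢ·Δ + c_f·Δ + d_f`. -/
noncomputable def fA (C : DeltaLin F ar) (f : F) (Δ : ℝ) (z : Fin (ar f) → ℝ) : ℝ :=
  (∑ i, (C.a f i : ℝ) * z i) + (∑ i, (C.b f i : ℝ) * z i * Δ) +
    (C.c f : ℝ) * Δ + (C.d f : ℝ)

/-- The parameter function `f^i(Δ) = Δ/(a_{f,i} + b_{f,i}·Δ)`. -/
noncomputable def par (C : DeltaLin F ar) (f : F) (i : Fin (ar f)) (Δ : ℝ) : ℝ :=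
  Δ / ((C.a f i : ℝ) + (C.b f i : ℝ) * Δ)

/-- Evaluation of a term under a Δ-assignment `α` (mapping each `Δ` and each variable
to a real): `[α,Δ](x) = α(Δ,x)` and
`[α,Δ](f(t₁,…,tₙ)) = f[Δ]([α,f¹(Δ)](t₁),…,[α,fⁿ(Δ)](tₙ))`. -/
noncomputable def evalA (C : DeltaLin F ar) (α : ℝ → ℕ → ℝ) : Tm F ar ℕ → ℝ → ℝ
  | .var x, Δ => α Δ x
  | .fn f ts, Δ => C.fA f Δ fun i => evalA C α (ts i) (C.par f i Δ)

/-- Compatibility of the interpretation with a TRS `R`: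
`[α,Δ](l) − [α,Δ](r) ≥ Δ` for every rule `l → r ∈ R`, every `Δ > 0` and every
Δ-assignment `α` with nonnegative values. -/
def Compat (C : DeltaLin F ar) (R : Set (Tm F ar ℕ × Tm F ar ℕ)) : Prop :=
  ∀ p ∈ R, ∀ Δ : ℝ, 0 < Δ → ∀ α : ℝ → ℕ → ℝ, (∀ Δ' x, 0 ≤ α Δ' x) →
    Δ ≤ C.evalA α p.1 Δ - C.evalA α p.2 Δ

end DeltaLin

/-! Take the zero assignment and `Δ := 1/|t|`. Compatibility, pushed through contexts (where
the coefficient `a + b·Δ` of an argument exactly compensates its parameter `Δ/(a + b·Δ)`),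
makes every rewrite step lower `[0,Δ](·)` by at least `Δ`. On the other hand
`[0,Δ](t) ≤ P·Δ·|t|² + Q·|t|` by induction on `t`, for constants with `c_f ≤ P`,
`Q·b_{f,i} ≤ P` and `d_f ≤ Q`: since `a_{f,i} ≤ 1`, the linear term of an argument only gains
`b·Δ·Q·|tᵢ|`, which the quadratic term absorbs. Hence a derivation from `t` has length at
most `(P + Q)·|t|²`, which also rules out infinite derivations. -/

theorem Tm.size_pos {F : Type} {ar : F → ℕ} {V : Type} (t : Tm F ar V) : 0 < t.size := by
  cases t <;> simp [Tm.size]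

namespace DeltaLin

variable {F : Type} {ar : F → ℕ} (C : DeltaLin F ar)

def coeff (f : F) (i : Fin (ar f)) (Δ : ℝ) : ℝ :=
  C.a f i + C.b f i * Δ

theorem coeff_pos (f : F) (i : Fin (ar f)) {Δ : ℝ} (hΔ : 0 < Δ) : 0 < C.coeff f i Δ := by
  unfold coeff
  rcases (C.a f i).eq_zero_or_pos with ha | ha
  · have hb : 0 < C.b f i := by have := C.pos f i; omega
    rw [ha, Nat.cast_zero, zero_add]
    exact mul_pos (mod_cast hb) hΔ
  · exact add_pos_of_pos_of_nonneg (mod_cast ha) (by positivity)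

theorem coeff_le (hres : ∀ f i, C.a f i ≤ 1) (f : F) (i : Fin (ar f)) (Δ : ℝ) :
    C.coeff f i Δ ≤ 1 + C.b f i * Δ := by
  have : (C.a f i : ℝ) ≤ 1 := by exact_mod_cast hres f i
  unfold coeff; linarith

theorem par_pos (f : F) (i : Fin (ar f)) {Δ : ℝ} (hΔ : 0 < Δ) : 0 < C.par f i Δ :=
  div_pos hΔ (C.coeff_pos f i hΔ)

theorem coeff_mul_par (f : F) (i : Fin (ar f)) {Δ : ℝ} (hΔ : 0 < Δ) :
    C.coeff f i Δ * C.par f i Δ = Δ :=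
  mul_div_cancel₀ Δ (C.coeff_pos f i hΔ).ne'

theorem fA_eq_sum_coeff (f : F) (Δ : ℝ) (z : Fin (ar f) → ℝ) :
    C.fA f Δ z = ∑ i, C.coeff f i Δ * z i + C.c f * Δ + C.d f := by
  simp only [fA, coeff, add_mul, Finset.sum_add_distrib]
  congr 3
  exact Finset.sum_congr rfl fun i _ => mul_right_comm _ _ _

theorem fA_update_add (f : F) (Δ : ℝ) (z : Fin (ar f) → ℝ) (i : Fin (ar f)) (w : ℝ) :
    C.fA f Δ (Function.update z i w) + C.coeff f i Δ * (z i - w) = C.fA f Δ z := by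
  have hcompl : ∑ j ∈ {i}ᶜ, C.coeff f j Δ * Function.update z i w j
      = ∑ j ∈ {i}ᶜ, C.coeff f j Δ * z j :=
    Finset.sum_congr rfl fun j hj => by
      rw [Function.update_of_ne (Finset.mem_compl.1 hj ∘ Finset.mem_singleton.2)]
  rw [fA_eq_sum_coeff, fA_eq_sum_coeff, Fintype.sum_eq_add_sum_compl i,
    Fintype.sum_eq_add_sum_compl i (fun j => C.coeff f j Δ * z j), hcompl,
    Function.update_self]
  ring

theorem evalA_nonneg {α : ℝ → ℕ → ℝ} (hα : ∀ Δ x, 0 ≤ α Δ x) (t : Tm F ar ℕ) {Δ : ℝ}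
    (hΔ : 0 < Δ) : 0 ≤ C.evalA α t Δ := by
  induction t generalizing Δ with
  | var x => exact hα Δ x
  | fn f ts ih =>
    rw [evalA, fA_eq_sum_coeff]
    have hsum : 0 ≤ ∑ i, C.coeff f i Δ * C.evalA α (ts i) (C.par f i Δ) :=
      Finset.sum_nonneg fun i _ =>
        mul_nonneg (C.coeff_pos f i hΔ).le (ih i (C.par_pos f i hΔ))
    positivity

/- `Compat` asks for assignments that are nonnegative at every `Δ`, also at `Δ ≤ 0` where
evaluation can be negative; clamping at `0` changes nothing at the `Δ > 0` that matter. -/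
theorem evalA_subst {α : ℝ → ℕ → ℝ} (hα : ∀ Δ x, 0 ≤ α Δ x) (σ : ℕ → Tm F ar ℕ)
    (t : Tm F ar ℕ) {Δ : ℝ} (hΔ : 0 < Δ) :
    C.evalA α (t.subst σ) Δ = C.evalA (fun Δ' x => max (C.evalA α (σ x) Δ') 0) t Δ := by
  induction t generalizing Δ with
  | var x => exact (max_eq_left (C.evalA_nonneg hα (σ x) hΔ)).symm
  | fn f ts ih =>
    simp only [Tm.subst, evalA]
    exact congrArg (C.fA f Δ) (funext fun i => ih i (C.par_pos f i hΔ))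

theorem evalA_add_le_of_rew {R : Set (Tm F ar ℕ × Tm F ar ℕ)} (hcompat : C.Compat R)
    {α : ℝ → ℕ → ℝ} (hα : ∀ Δ x, 0 ≤ α Δ x) {s t : Tm F ar ℕ} (h : Rew R s t) {Δ : ℝ}
    (hΔ : 0 < Δ) : C.evalA α t Δ + Δ ≤ C.evalA α s Δ := by
  induction h generalizing Δ with
  | @rule l r σ hmem =>
    have hc := hcompat (l, r) hmem Δ hΔ (fun Δ' x => max (C.evalA α (σ x) Δ') 0)
      fun _ _ => le_max_right _ 0
    rw [← C.evalA_subst hα σ l hΔ, ← C.evalA_subst hα σ r hΔ] at hc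
    linarith
  | @congr f ts i t' _ ih =>
    set z : Fin (ar f) → ℝ := fun j => C.evalA α (ts j) (C.par f j Δ)
    have hupdate : (fun j => C.evalA α (Function.update ts i t' j) (C.par f j Δ))
        = Function.update z i (C.evalA α t' (C.par f i Δ)) :=
      funext (Function.apply_update (fun j s => C.evalA α s (C.par f j Δ)) ts i t')
    have hstep : Δ ≤ C.coeff f i Δ * (z i - C.evalA α t' (C.par f i Δ)) := by
      calc Δ = C.coeff f i Δ * C.par f i Δ := (C.coeff_mul_par f i hΔ).symm
        _ ≤ _ := mul_le_mul_of_nonneg_left (by linarith [ih (C.par_pos f i hΔ)])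
          (C.coeff_pos f i hΔ).le
    have := C.fA_update_add f Δ z i (C.evalA α t' (C.par f i Δ))
    simp only [evalA, hupdate]
    linarith

theorem evalA_add_le_of_chainOf {R : Set (Tm F ar ℕ × Tm F ar ℕ)} (hcompat : C.Compat R)
    {α : ℝ → ℕ → ℝ} (hα : ∀ Δ x, 0 ≤ α Δ x) {m : ℕ} {d : ℕ → Tm F ar ℕ}
    (hd : ChainOf (Rew R) m d) {Δ : ℝ} (hΔ : 0 < Δ) :
    C.evalA α (d m) Δ + m * Δ ≤ C.evalA α (d 0) Δ := by
  induction m with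
  | zero => simp
  | succ k ih =>
    have hk := C.evalA_add_le_of_rew hcompat hα (hd k k.lt_succ_self) hΔ
    have := ih fun i hi => hd i (hi.trans k.lt_succ_self)
    push_cast
    linarith

theorem coeff_mul_le (hres : ∀ f i, C.a f i ≤ 1) {P Q : ℕ} (hb : ∀ f i, Q * C.b f i ≤ P)
    (f : F) (i : Fin (ar f)) {Δ : ℝ} (hΔ : 0 < Δ) {N : ℝ} (hN : 0 ≤ N) :
    C.coeff f i Δ * (P * C.par f i Δ * N ^ 2 + Q * N) ≤ P * Δ * N ^ 2 + (Q + P * Δ) * N := by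
  have hQb : (Q : ℝ) * C.b f i ≤ P := by exact_mod_cast hb f i
  have hcoeffQ : C.coeff f i Δ * Q ≤ Q + P * Δ := by
    nlinarith [C.coeff_le hres f i Δ, (Q.cast_nonneg : (0 : ℝ) ≤ Q)]
  have hpar := C.coeff_mul_par f i hΔ
  calc C.coeff f i Δ * (P * C.par f i Δ * N ^ 2 + Q * N)
      = P * (C.coeff f i Δ * C.par f i Δ) * N ^ 2 + C.coeff f i Δ * Q * N := by ring
    _ ≤ P * Δ * N ^ 2 + (Q + P * Δ) * N := by
      rw [hpar]; gcongr

theorem evalA_zero_le (hres : ∀ f i, C.a f i ≤ 1) {P Q : ℕ} (hc : ∀ f, C.c f ≤ P)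
    (hd : ∀ f, C.d f ≤ Q) (hb : ∀ f i, Q * C.b f i ≤ P) (t : Tm F ar ℕ) {Δ : ℝ} (hΔ : 0 < Δ) :
    C.evalA (fun _ _ => 0) t Δ ≤ P * Δ * t.size ^ 2 + Q * t.size := by
  induction t generalizing Δ with
  | var x =>
    simp only [evalA, Tm.size]
    positivity
  | fn f ts ih =>
    set N : Fin (ar f) → ℝ := fun j => (ts j).size
    set S := ∑ j, N j
    have hN : ∀ j, 0 ≤ N j := fun j => Nat.cast_nonneg _
    have hchildren : ∑ j, C.coeff f j Δ * C.evalA (fun _ _ => 0) (ts j) (C.par f j Δ)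
        ≤ P * Δ * S ^ 2 + (Q + P * Δ) * S :=
      calc _ ≤ ∑ j, (P * Δ * N j ^ 2 + (Q + P * Δ) * N j) :=
            Finset.sum_le_sum fun j _ => (mul_le_mul_of_nonneg_left (ih j (C.par_pos f j hΔ))
              (C.coeff_pos f j hΔ).le).trans (C.coeff_mul_le hres hb f j hΔ (hN j))
        _ = P * Δ * ∑ j, N j ^ 2 + (Q + P * Δ) * S := by
            rw [Finset.sum_add_distrib, Finset.mul_sum, Finset.mul_sum]
        _ ≤ P * Δ * S ^ 2 + (Q + P * Δ) * S := by
            gcongr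
            exact Finset.sum_sq_le_sq_sum_of_nonneg fun j _ => hN j
    have hcf : (C.c f : ℝ) ≤ P := by exact_mod_cast hc f
    have hdf : (C.d f : ℝ) ≤ Q := by exact_mod_cast hd f
    have hsize : ((1 + ∑ j, (ts j).size : ℕ) : ℝ) = 1 + S := by push_cast; rfl
    have hS : 0 ≤ S := Finset.sum_nonneg fun j _ => hN j
    rw [evalA, fA_eq_sum_coeff, Tm.size, hsize]
    nlinarith [mul_nonneg (mul_nonneg P.cast_nonneg hΔ.le) hS,
      mul_le_mul_of_nonneg_right hcf hΔ.le]

theorem length_le_of_chainOf {R : Set (Tm F ar ℕ × Tm F ar ℕ)} (hcompat : C.Compat R)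
    (hres : ∀ f i, C.a f i ≤ 1) {P Q : ℕ} (hc : ∀ f, C.c f ≤ P) (hd : ∀ f, C.d f ≤ Q)
    (hb : ∀ f i, Q * C.b f i ≤ P) {m : ℕ} {d : ℕ → Tm F ar ℕ}
    (hchain : ChainOf (Rew R) m d) : m ≤ (P + Q) * (d 0).size ^ 2 := by
  suffices (m : ℝ) ≤ (P + Q) * ((d 0).size : ℝ) ^ 2 by exact_mod_cast this
  have hn : (0 : ℝ) < (d 0).size := mod_cast (d 0).size_pos
  have hΔ : 0 < 1 / ((d 0).size : ℝ) := by positivity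
  have hzero : ∀ Δ x, (0 : ℝ) ≤ (fun _ _ => 0 : ℝ → ℕ → ℝ) Δ x := fun _ _ => le_rfl
  have hdecrease := C.evalA_add_le_of_chainOf hcompat hzero hchain hΔ
  have hlast := C.evalA_nonneg hzero (d m) hΔ
  have hfirst := C.evalA_zero_le hres hc hd hb (d 0) hΔ
  generalize ((d 0).size : ℝ) = n at *
  have hscaled : m * (1 / n) ≤ P * (1 / n) * n ^ 2 + Q * n := by linarith
  field_simp at hscaled
  nlinarith

end DeltaLin

theorem deltaRestricted_quadratic_general {F : Type} [Finite F] {ar : F → ℕ}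
    (R : Set (Tm F ar ℕ × Tm F ar ℕ))
    (C : DeltaLin F ar) (hres : ∀ f i, C.a f i ≤ 1) (hcompat : C.Compat R) :
    (¬ ∃ d : ℕ → Tm F ar ℕ, ∀ i, Rew R (d i) (d (i + 1))) ∧
    ∃ K : ℕ, ∀ (t : Tm F ar ℕ) (m : ℕ) (d : ℕ → Tm F ar ℕ),
      d 0 = t → ChainOf (Rew R) m d → m ≤ K * (Tm.size t) ^ 2 := by
  obtain ⟨c₀, hc₀⟩ := Finite.exists_le C.c
  obtain ⟨Q, hQ⟩ := Finite.exists_le C.d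
  obtain ⟨b₀, hb₀⟩ := Finite.exists_le fun p : Σ f, Fin (ar f) => C.b p.1 p.2
  have hlength : ∀ (t : Tm F ar ℕ) (m : ℕ) (d : ℕ → Tm F ar ℕ),
      d 0 = t → ChainOf (Rew R) m d → m ≤ (c₀ + Q * b₀ + Q) * t.size ^ 2 := by
    rintro _ m d rfl hchain
    refine C.length_le_of_chainOf hcompat hres (fun f => (hc₀ f).trans (Nat.le_add_right _ _))
      hQ (fun f i => ?_) hchain
    exact (Nat.mul_le_mul_left Q (hb₀ ⟨f, i⟩)).trans (Nat.le_add_left _ _)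
  refine ⟨?_, _, hlength⟩
  rintro ⟨d, hrew⟩
  have := hlength (d 0) ((c₀ + Q * b₀ + Q) * (d 0).size ^ 2 + 1) d rfl fun i _ => hrew i
  omega

/-- If a TRS `R` over a finite signature is compatible with a
Δ-restricted interpretation, then `R` is terminating and there is a constant `C ∈ ℕ`
such that every `→_R`-derivation starting from a term `t` has length at most `C·|t|²`. -/
theorem deltaRestricted_quadratic {F : Type} [Finite F] {ar : F → ℕ}
    (R : Set (Tm F ar ℕ × Tm F ar ℕ)) (hTRS : IsTRS R)
    (C : DeltaLin F ar) (hres : ∀ f i, C.a f i ≤ 1) (hcompat : C.Compat R) :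
    (¬ ∃ d : ℕ → Tm F ar ℕ, ∀ i, Rew R (d i) (d (i + 1))) ∧
    ∃ K : ℕ, ∀ (t : Tm F ar ℕ) (m : ℕ) (d : ℕ → Tm F ar ℕ),
      d 0 = t → ChainOf (Rew R) m d → m ≤ K * (Tm.size t) ^ 2 :=
  deltaRestricted_quadratic_general R C hres hcompat
end
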